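/- arXiv:1903.05158 — 5 statements merged into one kernel-verified Lean document; each statement's English description precedes it below -/
import Mathlib

section
/- Let K : (0,∞) → (0,∞) be of class C². If K̄(x, y) > K̄(x, y⋆) for every x, y ∈ 𝒪, then τ ↦ K(√τ) is strictly convex on (0,∞), in the sense that K(√τ₁) + K(√τ₂) > 2 K(√((τ₁+τ₂)/2)) for all τ₁, τ₂ ∈ (0,∞) with τ₁ ≠ τ₂. -/
open MeasureTheory
open scoped ENNReal NNReal Classical

noncomputable section

/-- `ℝ^m` with the Euclidean norm. -/
abbrev E (m : ℕ) := EuclideanSpace ℝ (Fin m)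

/-- `ℝ^{2m} = ℝ^m × ℝ^m`, written as pairs `x = (x', x'')`. -/
abbrev V (m : ℕ) := E m × E m

/-- The Euclidean norm of `x ∈ ℝ^{2m}`. -/
def nrm {m : ℕ} (x : V m) : ℝ := Real.sqrt (‖x.1‖ ^ 2 + ‖x.2‖ ^ 2)

/-- The Euclidean distance on `ℝ^{2m}`. -/
def distE {m : ℕ} (x y : V m) : ℝ := nrm (x - y)

/-- The set `𝒪 = {x : |x'| > |x''|}`. -/
def OO (m : ℕ) : Set (V m) := {x | ‖x.2‖ < ‖x.1‖}

/-- The set `ℐ = {x : |x'| < |x''|}`. -/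
def II (m : ℕ) : Set (V m) := {x | ‖x.1‖ < ‖x.2‖}

/-- The Simons cone `𝒞 = {x : |x'| = |x''|}`. -/
def simonsCone (m : ℕ) : Set (V m) := {x | ‖x.1‖ = ‖x.2‖}

/-- The involution `x = (x', x'') ↦ x⋆ = (x'', x')`. -/
def pstar {m : ℕ} (x : V m) : V m := (x.2, x.1)

/-- The group `O(m)² = O(m) × O(m)`. -/
abbrev G (m : ℕ) := Matrix.orthogonalGroup (Fin m) ℝ × Matrix.orthogonalGroup (Fin m) ℝ

/-- The action of `O(m)²` on `ℝ^m × ℝ^m`: `Rx = (R₁ x', R₂ x'')`. -/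
def act {m : ℕ} (R : G m) (x : V m) : V m :=
  (Matrix.toEuclideanLin (R.1 : Matrix (Fin m) (Fin m) ℝ) x.1,
   Matrix.toEuclideanLin (R.2 : Matrix (Fin m) (Fin m) ℝ) x.2)

/-- The averaged kernel `K̄(x,y) = ∫_{O(m)²} K(|Rx − y|) dR ∈ [0,+∞]`,
where `dR` is the (normalized Haar probability) measure `μ` on `O(m)²`. -/
def Kbar {m : ℕ} [MeasurableSpace (G m)] (μ : Measure (G m)) (K : ℝ → ℝ) (x y : V m) : ℝ≥0∞ :=
  ∫⁻ R, ENNReal.ofReal (K (distE (act R x) y)) ∂μ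

/-- A doubly radial function: `w(Rx) = w(x)` for all `R ∈ O(m)²`. -/
def DoublyRadial {m : ℕ} (w : V m → ℝ) : Prop := ∀ (R : G m) (x : V m), w (act R x) = w x

/-! Test the hypothesis on `x = (v, 0)` and `y = (w, 0)`. Then `|Rx − y⋆|² = |v|² + |w|²` does not
depend on `R`, while `|Rx − y|² = |v|² + |w|² − 2⟪R₁v, w⟫` and `R ↦ ⟪R₁v, w⟫` has mean zero
(replace `R₁` by `−R₁`). So if `g(τ) = K(√τ)` lay below a line through `(c, g c)` on
`[c − 2|v||w|, c + 2|v||w|]`, `c = |v|² + |w|²`, averaging would give `K̄(x, y) ≤ K̄(x, y⋆)`.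
A continuous `g` violating strict midpoint convexity on `[τ₁, τ₂]` does have such a supporting
line, at an interior maximum of `g` minus its secant. -/

open Set
open scoped RealInnerProductSpace

section MidpointConvexity

variable {f g : ℝ → ℝ} {a b : ℝ}

lemma exists_mem_Ioo_isMaxOn_Icc (hf : ContinuousOn f (Icc a b)) {c : ℝ} (hc : c ∈ Ioo a b)
    (ha : f a ≤ f c) (hb : f b ≤ f c) : ∃ ξ ∈ Ioo a b, IsMaxOn f (Icc a b) ξ := by
  obtain ⟨ξ, hξ, hmax⟩ := isCompact_Icc.exists_isMaxOn ⟨c, Ioo_subset_Icc_self hc⟩ hf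
  rcases eq_endpoints_or_mem_Ioo_of_mem_Icc hξ with rfl | rfl | hξ
  · exact ⟨c, hc, fun t ht => (hmax ht).trans ha⟩
  · exact ⟨c, hc, fun t ht => (hmax ht).trans hb⟩
  · exact ⟨ξ, hξ, hmax⟩

theorem two_mul_lt_add_of_forall_exists_lt (hab : a < b) (hg : ContinuousOn g (Icc a b))
    (h : ∀ c r k, 0 < r → a ≤ c - r → c + r ≤ b →
      ∃ t ∈ Icc (c - r) (c + r), g c + k * (t - c) < g t) :
    2 * g ((a + b) / 2) < g a + g b := by
  by_contra! hmid
  set k := (g b - g a) / (b - a)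
  have hk : k * (b - a) = g b - g a := div_mul_cancel₀ _ (sub_ne_zero.2 hab.ne')
  obtain ⟨ξ, ⟨haξ, hξb⟩, hmax⟩ := exists_mem_Ioo_isMaxOn_Icc (f := fun t => g t - k * (t - a))
    (hg.sub (by fun_prop)) (c := (a + b) / 2) ⟨by linarith, by linarith⟩
    (by linarith) (by linarith)
  set r := min (ξ - a) (b - ξ)
  have hra : r ≤ ξ - a := min_le_left _ _
  have hrb : r ≤ b - ξ := min_le_right _ _
  obtain ⟨t, ht, hlt⟩ := h ξ r k (lt_min (by linarith) (by linarith)) (by linarith) (by linarith)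
  have hle : g t - k * (t - a) ≤ g ξ - k * (ξ - a) :=
    hmax ⟨by linarith [ht.1], by linarith [ht.2]⟩
  linarith

end MidpointConvexity

lemma MeasureTheory.lintegral_ofReal_const_add {α : Type*} [MeasurableSpace α] {μ : Measure α}
    [IsProbabilityMeasure μ] {f : α → ℝ} (hf : Integrable f μ) (hf0 : ∫ x, f x ∂μ = 0) {c : ℝ}
    (hcf : ∀ x, 0 ≤ c + f x) : ∫⁻ x, ENNReal.ofReal (c + f x) ∂μ = ENNReal.ofReal c := by
  have hcf_int : Integrable (fun x => c + f x) μ := (integrable_const c).add hf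
  rw [← ofReal_integral_eq_lintegral_ofReal hcf_int (.of_forall hcf),
    integral_add (integrable_const c) hf, hf0, integral_const, probReal_univ, one_smul, add_zero]

lemma Matrix.norm_toEuclideanLin_of_mem_orthogonalGroup {n : Type*} [Fintype n] [DecidableEq n]
    {A : Matrix n n ℝ} (hA : A ∈ orthogonalGroup n ℝ) (v : EuclideanSpace ℝ n) :
    ‖toEuclideanLin A v‖ = ‖v‖ :=
  ContinuousLinearMap.norm_map_of_mem_unitary
    (Unitary.map_mem (toEuclideanCLM (𝕜 := ℝ) (n := n)) hA) v

lemma exists_norm_sq_add_norm_sq_eq {F : Type*} [NormedAddCommGroup F] [NormedSpace ℝ F]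
    [Nontrivial F] {c r : ℝ} (hr : 0 < r) (hrc : r < c) :
    ∃ v w : F, 0 < ‖w‖ ∧ ‖w‖ < ‖v‖ ∧ ‖v‖ ^ 2 + ‖w‖ ^ 2 = c ∧ 2 * ‖v‖ * ‖w‖ = r := by
  have hs₁ : 0 < √(c - r) := Real.sqrt_pos.2 (by linarith)
  have hs₁₂ : √(c - r) < √(c + r) := Real.sqrt_lt_sqrt (by linarith) (by linarith)
  have hsq₁ : √(c - r) ^ 2 = c - r := Real.sq_sqrt (by linarith)
  have hsq₂ : √(c + r) ^ 2 = c + r := Real.sq_sqrt (by linarith)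
  obtain ⟨v, hv⟩ := exists_norm_eq F (by positivity : 0 ≤ (√(c + r) + √(c - r)) / 2)
  obtain ⟨w, hw⟩ := exists_norm_eq F (by linarith : 0 ≤ (√(c + r) - √(c - r)) / 2)
  refine ⟨v, w, by linarith, by linarith, ?_, ?_⟩ <;> rw [hv, hw]
  · linear_combination (hsq₁ + hsq₂) / 2
  · linear_combination (hsq₂ - hsq₁) / 2

section DoublyRadialAverage

variable {m : ℕ}

def fstRot (R : G m) : E m →ₗ[ℝ] E m := Matrix.toEuclideanLin (R.1 : Matrix (Fin m) (Fin m) ℝ)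

lemma norm_fstRot (R : G m) (v : E m) : ‖fstRot R v‖ = ‖v‖ :=
  Matrix.norm_toEuclideanLin_of_mem_orthogonalGroup R.1.2 v

lemma abs_inner_fstRot_le (R : G m) (v w : E m) : |⟪fstRot R v, w⟫| ≤ ‖v‖ * ‖w‖ :=
  (abs_real_inner_le_norm _ _).trans_eq (by rw [norm_fstRot])

lemma continuous_inner_fstRot (v w : E m) : Continuous fun R : G m => ⟪fstRot R v, w⟫ := by
  simp only [fstRot, Matrix.toLpLin_apply]
  fun_prop

lemma fstRot_neg_one_mul (R : G m) (v : E m) : fstRot ((-1, 1) * R) v = -fstRot R v := by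
  simp [fstRot, Unitary.coe_neg]

lemma act_prod_zero (R : G m) (v : E m) : act R (v, 0) = (fstRot R v, 0) := by
  simp [act, fstRot]

lemma distE_act_prod_zero_pstar (R : G m) (v w : E m) :
    distE (act R (v, 0)) (pstar (w, 0)) = √(‖v‖ ^ 2 + ‖w‖ ^ 2) := by
  simp [distE, nrm, pstar, act_prod_zero, norm_fstRot]

lemma distE_act_prod_zero (R : G m) (v w : E m) :
    distE (act R (v, 0)) (w, 0) = √(‖v‖ ^ 2 + ‖w‖ ^ 2 - 2 * ⟪fstRot R v, w⟫) := by
  simp only [distE, nrm, act_prod_zero, Prod.fst_sub, Prod.snd_sub, sub_zero, norm_zero]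
  rw [norm_sub_sq_real, norm_fstRot]
  ring_nf

variable [MeasurableSpace (G m)] (μ : Measure (G m))

lemma integral_inner_fstRot [BorelSpace (G m)] [μ.IsMulLeftInvariant] (v w : E m) :
    ∫ R, ⟪fstRot R v, w⟫ ∂μ = 0 := by
  have h := integral_mul_left_eq_self (μ := μ) (fun R => ⟪fstRot R v, w⟫) (-1, 1)
  simp only [fstRot_neg_one_mul, inner_neg_left, integral_neg] at h
  linarith

lemma integrable_inner_fstRot [BorelSpace (G m)] [IsProbabilityMeasure μ] (v w : E m) :
    Integrable (fun R => ⟪fstRot R v, w⟫) μ :=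
  .of_bound (continuous_inner_fstRot v w).aestronglyMeasurable (‖v‖ * ‖w‖)
    (.of_forall fun R => abs_inner_fstRot_le R v w)

lemma Kbar_prod_zero_pstar [IsProbabilityMeasure μ] (K : ℝ → ℝ) (v w : E m) :
    Kbar μ K (v, 0) (pstar (w, 0)) = ENNReal.ofReal (K √(‖v‖ ^ 2 + ‖w‖ ^ 2)) := by
  simp [Kbar, distE_act_prod_zero_pstar]

theorem exists_lt_K_sqrt [BorelSpace (G m)] [IsProbabilityMeasure μ] [μ.IsMulLeftInvariant]
    (hm : 1 ≤ m) {K : ℝ → ℝ} (hKpos : ∀ τ : ℝ, 0 < τ → 0 < K τ)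
    (hker : ∀ x ∈ OO m, ∀ y ∈ OO m, Kbar μ K x (pstar y) < Kbar μ K x y)
    {c r : ℝ} (hr : 0 < r) (hrc : r < c) (k : ℝ) :
    ∃ t ∈ Icc (c - r) (c + r), K √c + k * (t - c) < K √t := by
  have : Nonempty (Fin m) := ⟨⟨0, hm⟩⟩
  obtain ⟨v, w, hw, hwv, hc, hvw⟩ := exists_norm_sq_add_norm_sq_eq (F := E m) hr hrc
  by_contra! hle
  have hx : ((v, 0) : V m) ∈ OO m := by simpa [OO] using hw.trans hwv
  have hy : ((w, 0) : V m) ∈ OO m := by simpa [OO] using hw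
  have hmem : ∀ R : G m, c - 2 * ⟪fstRot R v, w⟫ ∈ Icc (c - r) (c + r) := fun R => by
    have hinner := abs_le.1 (abs_inner_fstRot_le R v w)
    constructor <;> linarith
  have hline : ∀ R : G m,
      K √(c - 2 * ⟪fstRot R v, w⟫) ≤ K √c + -2 * k * ⟪fstRot R v, w⟫ := fun R => by
    linarith [hle _ (hmem R)]
  have hnonneg : ∀ R : G m, 0 ≤ K √c + -2 * k * ⟪fstRot R v, w⟫ := fun R =>
    (hKpos _ (Real.sqrt_pos.2 (by linarith [(hmem R).1]))).le.trans (hline R)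
  refine (hker _ hx _ hy).not_ge ?_
  calc Kbar μ K (v, 0) (w, 0)
      ≤ ∫⁻ R, ENNReal.ofReal (K √c + -2 * k * ⟪fstRot R v, w⟫) ∂μ :=
        lintegral_mono fun R => ENNReal.ofReal_le_ofReal <| by
          rw [distE_act_prod_zero, hc]
          exact hline R
    _ = ENNReal.ofReal (K √c) :=
        lintegral_ofReal_const_add ((integrable_inner_fstRot μ v w).const_mul _)
          (by rw [integral_const_mul, integral_inner_fstRot, mul_zero]) hnonneg
    _ = Kbar μ K (v, 0) (pstar (w, 0)) := by rw [Kbar_prod_zero_pstar, hc]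

end DoublyRadialAverage

theorem statement_2_general (m : ℕ) (hm : 1 ≤ m)
    [MeasurableSpace (G m)] [BorelSpace (G m)]
    (μ : Measure (G m)) [IsProbabilityMeasure μ]
    [μ.IsMulLeftInvariant]
    (K : ℝ → ℝ) (hKpos : ∀ τ : ℝ, 0 < τ → 0 < K τ)
    (hKC2 : ContDiffOn ℝ 2 K (Set.Ioi (0 : ℝ)))
    (hker : ∀ x ∈ OO m, ∀ y ∈ OO m, Kbar μ K x (pstar y) < Kbar μ K x y) :
    ∀ τ₁ τ₂ : ℝ, 0 < τ₁ → 0 < τ₂ → τ₁ ≠ τ₂ →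
      2 * K (Real.sqrt ((τ₁ + τ₂) / 2)) < K (Real.sqrt τ₁) + K (Real.sqrt τ₂) := by
  intro τ₁ τ₂ h₁ h₂ hne
  wlog hlt : τ₁ < τ₂ generalizing τ₁ τ₂
  · have := this τ₂ τ₁ h₂ h₁ hne.symm (hne.lt_or_gt.resolve_left hlt)
    rwa [add_comm τ₂, add_comm (K √τ₂)] at this
  have hcont : ContinuousOn (fun t => K √t) (Icc τ₁ τ₂) :=
    hKC2.continuousOn.comp Real.continuous_sqrt.continuousOn
      fun t ht => Real.sqrt_pos.2 (h₁.trans_le ht.1)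
  exact two_mul_lt_add_of_forall_exists_lt hlt hcont fun c r k hr hτ₁ _ =>
    exists_lt_K_sqrt μ hm hKpos hker hr (by linarith) k

/-- If `K` is `C²` on `(0,∞)` and `K̄(x,y) > K̄(x,y⋆)` for every `x, y ∈ 𝒪`, then
`τ ↦ K(√τ)` is strictly convex on `(0,∞)`. -/
theorem statement_2 (m : ℕ) (hm : 1 ≤ m)
    [MeasurableSpace (G m)] [BorelSpace (G m)]
    (μ : Measure (G m)) [IsProbabilityMeasure μ]
    [μ.IsMulLeftInvariant] [μ.IsMulRightInvariant]
    (K : ℝ → ℝ) (hKpos : ∀ τ : ℝ, 0 < τ → 0 < K τ)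
    (hKC2 : ContDiffOn ℝ 2 K (Set.Ioi (0 : ℝ)))
    (hker : ∀ x ∈ OO m, ∀ y ∈ OO m, Kbar μ K x (pstar y) < Kbar μ K x y) :
    ∀ τ₁ τ₂ : ℝ, 0 < τ₁ → 0 < τ₂ → τ₁ ≠ τ₂ →
      2 * K (Real.sqrt ((τ₁ + τ₂) / 2)) < K (Real.sqrt τ₁) + K (Real.sqrt τ₂) :=
  statement_2_general m hm μ K hKpos hKC2 hker
end
end

section
/- Expression of the operator on odd functions. Let K : (0,∞) → (0,∞) be measurable and let w : ℝ^{2m} → ℝ be doubly radial and odd with respect to the Simons cone. Let x ∈ 𝒪 be such that ∫_{ℝ^{2m}} |w(x) − w(y)| K̄(x, y) dy < ∞ and ∫_𝒪 K̄(x, y⋆) dy < ∞. Then ∫_{ℝ^{2m}} (w(x) − w(y)) K̄(x, y) dy = ∫_𝒪 (w(x) − w(y)) K̄(x, y) dy + ∫_𝒪 (w(x) + w(y)) K̄(x, y⋆) dy = ∫_𝒪 (w(x) − w(y)) (K̄(x, y) − K̄(x, y⋆)) dy + 2 w(x) ∫_𝒪 K̄(x, y⋆) dy. -/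
/-!
The Simons cone `|x'| = |x''|` is a Lebesgue null set (each slice `x' = a` is a sphere), so
`ℝ^{2m}` is, up to a null set, the disjoint union of `𝒪` and `ℐ = 𝒪⋆`. The swap `⋆` preserves
Lebesgue measure, and by oddness the integrand `(w(x) − w(y)) K̄(x, y)` becomes
`(w(x) + w(y)) K̄(x, y⋆)` under `y ↦ y⋆`; this gives the first identity. The second one is the
pointwise identity `(a − b) k + (a + b) k⋆ = (a − b)(k − k⋆) + 2 a k⋆` integrated over `𝒪`.
-/

open MeasureTheory
open scoped ENNReal NNReal Classical

noncomputable section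

lemma integrable_mul_toReal_of_lintegral_lt_top {α : Type*} [MeasurableSpace α]
    {ν : Measure α} {a : α → ℝ} {b : α → ℝ≥0∞} (ha : Measurable a) (hb : Measurable b)
    (h : ∫⁻ y, ENNReal.ofReal |a y| * b y ∂ν < ⊤) :
    Integrable (fun y => a y * (b y).toReal) ν := by
  refine ⟨(ha.mul hb.ennreal_toReal).aestronglyMeasurable, ?_⟩
  rw [hasFiniteIntegral_iff_norm]
  refine lt_of_le_of_lt (lintegral_mono fun y => ?_) h
  rw [Real.norm_eq_abs, abs_mul, abs_of_nonneg ENNReal.toReal_nonneg,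
    ENNReal.ofReal_mul (abs_nonneg _)]
  exact mul_le_mul_right ENNReal.ofReal_toReal_le _

section

variable {m : ℕ}

lemma continuous_act (x : V m) : Continuous fun R : G m => act R x := by
  have hlin (v : E m) : Continuous fun M : Matrix (Fin m) (Fin m) ℝ =>
      Matrix.toEuclideanLin M v :=
    ((LinearMap.applyₗ v).comp Matrix.toEuclideanLin.toLinearMap).continuous_of_finiteDimensional
  exact ((hlin x.1).comp (continuous_subtype_val.comp continuous_fst)).prodMk
    ((hlin x.2).comp (continuous_subtype_val.comp continuous_snd))

lemma continuous_nrm : Continuous (nrm (m := m)) := by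
  unfold nrm
  fun_prop

lemma measurable_Kbar [MeasurableSpace (G m)] [BorelSpace (G m)] (μ : Measure (G m)) [SFinite μ]
    {K : ℝ → ℝ} (hK : Measurable K) (x : V m) : Measurable (Kbar μ K x) := by
  have hdist : Continuous fun p : V m × G m => distE (act p.2 x) p.1 :=
    continuous_nrm.comp (((continuous_act x).comp continuous_snd).sub continuous_fst)
  exact (ENNReal.measurable_ofReal.comp (hK.comp hdist.measurable)).lintegral_prod_right'

lemma measurePreserving_pstar : MeasurePreserving (pstar (m := m)) :=
  Measure.measurePreserving_swap

lemma measurableEmbedding_pstar : MeasurableEmbedding (pstar (m := m)) :=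
  MeasurableEquiv.prodComm.measurableEmbedding

lemma pstar_preimage_II : pstar ⁻¹' II m = OO m := rfl

lemma measurableSet_II : MeasurableSet (II m) :=
  measurableSet_lt (continuous_norm.comp continuous_fst).measurable
    (continuous_norm.comp continuous_snd).measurable

lemma volume_simonsCone (hm : 1 ≤ m) : volume (simonsCone m) = 0 := by
  have : Nonempty (Fin m) := ⟨⟨0, hm⟩⟩
  have hmeas : MeasurableSet (simonsCone m) :=
    measurableSet_eq_fun (continuous_norm.comp continuous_fst).measurable
      (continuous_norm.comp continuous_snd).measurable
  have hslice (a : E m) : Prod.mk a ⁻¹' simonsCone m = Metric.sphere 0 ‖a‖ := by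
    ext b
    simp [simonsCone, eq_comm]
  simp [Measure.volume_eq_prod, Measure.prod_apply hmeas, hslice, Measure.addHaar_sphere]

lemma OO_union_II_ae_eq_univ (hm : 1 ≤ m) :
    (OO m ∪ II m : Set (V m)) =ᵐ[volume] Set.univ := by
  refine ae_eq_univ.2 (measure_mono_null (fun y hy => ?_) (volume_simonsCone hm))
  simp only [Set.mem_compl_iff, Set.mem_union, OO, II, Set.mem_ofPred_eq, not_or, not_lt] at hy
  exact le_antisymm hy.1 hy.2

lemma integral_eq_setIntegral_OO_add_setIntegral_OO_pstar (hm : 1 ≤ m) {f : V m → ℝ}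
    (hf : Integrable f) : ∫ y, f y = (∫ y in OO m, f y) + ∫ y in OO m, f (pstar y) := by
  have hdisj : Disjoint (OO m) (II m) :=
    Set.disjoint_left.2 fun y (hO : ‖y.2‖ < ‖y.1‖) (hI : ‖y.1‖ < ‖y.2‖) =>
      lt_asymm hO hI
  rw [← setIntegral_univ, ← setIntegral_congr_set (OO_union_II_ae_eq_univ hm),
    setIntegral_union hdisj measurableSet_II hf.integrableOn hf.integrableOn, ← pstar_preimage_II,
    measurePreserving_pstar.setIntegral_preimage_emb measurableEmbedding_pstar]

end

theorem statement_7_general (m : ℕ) (hm : 1 ≤ m)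
    [MeasurableSpace (G m)] [BorelSpace (G m)]
    (μ : Measure (G m)) [IsProbabilityMeasure μ]
    (K : ℝ → ℝ) (hKmeas : Measurable K)
    (w : V m → ℝ) (hwmeas : Measurable w)
    (hodd : ∀ x, w (pstar x) = - w x)
    (x : V m)
    (hfin1 : (∫⁻ y, ENNReal.ofReal |w x - w y| * Kbar μ K x y) < ⊤)
    (hfin2 : (∫⁻ y in OO m, Kbar μ K x (pstar y)) < ⊤) :
    (∫ y, (w x - w y) * (Kbar μ K x y).toReal) =
      (∫ y in OO m, (w x - w y) * (Kbar μ K x y).toReal)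
        + (∫ y in OO m, (w x + w y) * (Kbar μ K x (pstar y)).toReal) ∧
    (∫ y, (w x - w y) * (Kbar μ K x y).toReal) =
      (∫ y in OO m, (w x - w y)
          * ((Kbar μ K x y).toReal - (Kbar μ K x (pstar y)).toReal))
        + 2 * w x * (∫⁻ y in OO m, Kbar μ K x (pstar y)).toReal := by
  have hKbar := measurable_Kbar μ hKmeas x
  have hKbar_pstar : Measurable fun y => Kbar μ K x (pstar y) :=
    hKbar.comp measurePreserving_pstar.measurable
  have hf : Integrable fun y => (w x - w y) * (Kbar μ K x y).toReal :=
    integrable_mul_toReal_of_lintegral_lt_top (measurable_const.sub hwmeas) hKbar hfin1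
  have hf_pstar :
      IntegrableOn (fun y => (w x + w y) * (Kbar μ K x (pstar y)).toReal) (OO m) := by
    have := measurePreserving_pstar.integrable_comp_of_integrable hf
    simp only [Function.comp_def, hodd, sub_neg_eq_add] at this
    exact this.integrableOn
  have hk_pstar : IntegrableOn (fun y => (Kbar μ K x (pstar y)).toReal) (OO m) :=
    integrable_toReal_of_lintegral_ne_top hKbar_pstar.aemeasurable hfin2.ne
  have hsplit := integral_eq_setIntegral_OO_add_setIntegral_OO_pstar hm hf
  simp only [hodd, sub_neg_eq_add] at hsplit
  refine ⟨hsplit, hsplit.trans ?_⟩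
  have hintegrand :
      (fun y => (w x - w y) * ((Kbar μ K x y).toReal - (Kbar μ K x (pstar y)).toReal)) =
        fun y => ((w x - w y) * (Kbar μ K x y).toReal
          + (w x + w y) * (Kbar μ K x (pstar y)).toReal)
          - 2 * w x * (Kbar μ K x (pstar y)).toReal := by
    funext y; ring
  rw [hintegrand, integral_sub ?_ (hk_pstar.const_mul _), integral_add hf.integrableOn hf_pstar,
    integral_const_mul, integral_toReal hKbar_pstar.aemeasurable (ae_lt_top hKbar_pstar hfin2.ne)]
  · ring
  · exact hf.integrableOn.add hf_pstar

/-- Expression of the operator `L_K` on doubly radial odd functions: the integral over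
`ℝ^{2m}` can be written as integrals over `𝒪` only. -/
theorem statement_7 (m : ℕ) (hm : 1 ≤ m)
    [MeasurableSpace (G m)] [BorelSpace (G m)]
    (μ : Measure (G m)) [IsProbabilityMeasure μ]
    [μ.IsMulLeftInvariant] [μ.IsMulRightInvariant]
    (K : ℝ → ℝ) (hKmeas : Measurable K) (hKpos : ∀ τ : ℝ, 0 < τ → 0 < K τ)
    (w : V m → ℝ) (hwmeas : Measurable w) (hdr : DoublyRadial w)
    (hodd : ∀ x, w (pstar x) = - w x)
    (x : V m) (hx : x ∈ OO m)
    (hfin1 : (∫⁻ y, ENNReal.ofReal |w x - w y| * Kbar μ K x y) < ⊤)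
    (hfin2 : (∫⁻ y in OO m, Kbar μ K x (pstar y)) < ⊤) :
    (∫ y, (w x - w y) * (Kbar μ K x y).toReal) =
      (∫ y in OO m, (w x - w y) * (Kbar μ K x y).toReal)
        + (∫ y in OO m, (w x + w y) * (Kbar μ K x (pstar y)).toReal) ∧
    (∫ y, (w x - w y) * (Kbar μ K x y).toReal) =
      (∫ y in OO m, (w x - w y)
          * ((Kbar μ K x y).toReal - (Kbar μ K x (pstar y)).toReal))
        + 2 * w x * (∫⁻ y in OO m, Kbar μ K x (pstar y)).toReal :=
  statement_7_general m hm μ K hKmeas w hwmeas hodd x hfin1 hfin2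
end
end

section
/- Convexity characterization via a four-point inequality. Let K : (0,∞) → (0,∞) be measurable. The following are equivalent. (i) τ ↦ K(√τ) is strictly convex on (0,∞), i.e., K(√τ₁) + K(√τ₂) > 2 K(√((τ₁+τ₂)/2)) for all τ₁ ≠ τ₂ in (0,∞). (ii) For all constants c₁ > 0 and c₂ > 0, the function g : (0, 1/c₂) → ℝ defined by g(z) := K(c₁ √(1 + c₂ z)) + K(c₁ √(1 − c₂ z)) satisfies g(A) + g(D) ≥ g(B) + g(C) whenever A, B, C, D ∈ (0, 1/c₂) satisfy A = max{A, B, C, D} and A + D ≥ B + C; moreover, under these constraints, equality g(A) + g(D) = g(B) + g(C) holds if and only if the (unordered) pairs {A, D} and {B, C} coincide. -/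
noncomputable section

/-- The auxiliary function `g(z) = K(c₁√(1 + c₂ z)) + K(c₁√(1 − c₂ z))`. -/
def gaux (K : ℝ → ℝ) (c₁ c₂ z : ℝ) : ℝ :=
  K (c₁ * Real.sqrt (1 + c₂ * z)) + K (c₁ * Real.sqrt (1 - c₂ * z))

/-!
Write `f τ = K (√τ)`. Since `c₁ √(1 ± c₂ z) = √(c₁² (1 ± c₂ z))`, `g = gaux K c₁ c₂` is `f` summed
along two affine maps of opposite slopes: it is even, and strictly midpoint convex on
`(-1/c₂, 1/c₂)` when `f` is. By Sierpiński's theorem a measurable midpoint convex function is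
convex (it is bounded above near each point by a measure argument, hence continuous), so `g` is
even and strictly convex. Then `g` increases strictly on `[0, 1/c₂)` and `g u + g v < g p + g q`
whenever `p < u, v < q` and `u + v = p + q`; these two facts give the four-point inequality and its
equality cases.

Conversely, for `c₁ = √m`, `c₂ = 1/m` one gets `g t = f (m + t) + f (m - t)`, and the four-point
condition makes this strictly increasing and midpoint convex in `t ∈ (0, m)`, for every `m`.
Combining these facts at the centres `m` and `m ± t` shows that the excess
`f (m + t) + f (m - t) - 2 f m` more than halves when `t` is halved, so it gets arbitrarily small;
midpoint convexity at the centre `3m/2` then transfers this to `2 f m ≤ f (m + t) + f (m - t)`,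
which monotonicity makes strict.
-/

open Set Filter Metric MeasureTheory Topology

def MidpointConvexOn (s : Set ℝ) (f : ℝ → ℝ) : Prop :=
  ∀ x y : ℝ, x ∈ s → y ∈ s → 2 * f ((x + y) / 2) ≤ f x + f y

def StrictMidpointConvexOn (s : Set ℝ) (f : ℝ → ℝ) : Prop :=
  ∀ x y : ℝ, x ∈ s → y ∈ s → x ≠ y → 2 * f ((x + y) / 2) < f x + f y

theorem two_mul_sub_mem_closedBall {z w r : ℝ} (hw : w ∈ closedBall z r) :
    2 * z - w ∈ closedBall z r := by
  rw [mem_closedBall, Real.dist_eq] at hw ⊢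
  rwa [show 2 * z - w - z = -(w - z) by ring, abs_neg]

theorem exists_mem_closedBall_notMem_and_two_mul_sub_notMem {B : Set ℝ} {z δ : ℝ}
    (hB : 2 * volume B < volume (closedBall z δ)) :
    ∃ w ∈ closedBall z δ, w ∉ B ∧ 2 * z - w ∉ B := by
  have hreflect : volume ((fun w => 2 * z - w) ⁻¹' B) = volume B := by
    have : (fun w => 2 * z - w) ⁻¹' B = Neg.neg ⁻¹' ((fun w => 2 * z + w) ⁻¹' B) := by
      ext w; simp [sub_eq_add_neg]
    rw [this, Measure.measure_preimage_neg, measure_preimage_add]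
  have hnot : ¬ closedBall z δ ⊆ B ∪ (fun w => 2 * z - w) ⁻¹' B := fun hsub =>
    (measure_mono hsub |>.trans (measure_union_le _ _)).not_gt (by rwa [hreflect, ← two_mul])
  obtain ⟨w, hw, hwB⟩ := not_subset.1 hnot
  simp only [mem_union, mem_preimage, not_or] at hwB
  exact ⟨w, hw, hwB⟩

namespace MidpointConvexOn

variable {s : Set ℝ} {f : ℝ → ℝ}

theorem exists_closedBall_subset_bddAbove (hmid : MidpointConvexOn s f) (hf : Measurable f)
    (hs : IsOpen s) {x : ℝ} (hx : x ∈ s) :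
    ∃ δ > 0, closedBall x δ ⊆ s ∧ BddAbove (f '' closedBall x δ) := by
  obtain ⟨ε, hε, hεs⟩ := nhds_basis_closedBall.mem_iff.1 (hs.mem_nhds hx)
  set J := closedBall x ε
  set B : ℕ → Set ℝ := fun n => J ∩ {y | (n : ℝ) < f y}
  have hB_anti : Antitone B := fun m n hmn =>
    inter_subset_inter_right J fun y (hy : (n : ℝ) < f y) =>
      show (m : ℝ) < f y from (Nat.cast_le.2 hmn).trans_lt hy
  have hB_empty : ⋂ n, B n = ∅ := by
    refine eq_empty_of_forall_notMem fun y hy => ?_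
    obtain ⟨n, hn⟩ := exists_nat_ge (f y)
    exact (mem_iInter.1 hy n).2.not_ge hn
  have hB_tendsto : Tendsto (fun n => 2 * volume (B n)) atTop (𝓝 0) := by
    have hB_meas : ∀ n, MeasurableSet (B n) := fun n =>
      measurableSet_closedBall.inter (measurableSet_lt measurable_const hf)
    have hB_fin : volume (B 0) ≠ ⊤ :=
      ((measure_mono inter_subset_left).trans_lt (measure_closedBall_lt_top (μ := volume))).ne
    have := tendsto_measure_iInter_atTop (fun n => (hB_meas n).nullMeasurableSet) hB_anti
      ⟨0, hB_fin⟩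
    rw [hB_empty, measure_empty] at this
    simpa using ENNReal.Tendsto.const_mul this (Or.inr ENNReal.ofNat_ne_top)
  obtain ⟨n, hn⟩ := (hB_tendsto.eventually_lt_const
    (by simpa using hε : (0 : ENNReal) < ENNReal.ofReal (2 * (ε / 2)))).exists
  refine ⟨ε / 2, half_pos hε, (closedBall_subset_closedBall (half_le_self hε.le)).trans hεs,
    ⟨n, ?_⟩⟩
  -- `B n` is too small to contain, for every `w` near `z`, either `w` or its mirror image `2z - w`
  rintro _ ⟨z, hz, rfl⟩
  have hzJ : closedBall z (ε / 2) ⊆ J := closedBall_subset_closedBall' (by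
    rw [mem_closedBall] at hz; linarith)
  rw [← Real.volume_closedBall z] at hn
  obtain ⟨w, hw, hwB, hw'B⟩ := exists_mem_closedBall_notMem_and_two_mul_sub_notMem hn
  have hw' := two_mul_sub_mem_closedBall hw
  have hfw : f w ≤ n := not_lt.1 fun h => hwB ⟨hzJ hw, h⟩
  have hfw' : f (2 * z - w) ≤ n := not_lt.1 fun h => hw'B ⟨hzJ hw', h⟩
  have := hmid w (2 * z - w) (hεs (hzJ hw)) (hεs (hzJ hw'))
  rw [show (w + (2 * z - w)) / 2 = z by ring] at this
  linarith

theorem continuousAt_of_bddAbove (hmid : MidpointConvexOn s f) {x δ : ℝ} (hδ : 0 < δ)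
    (hball : closedBall x δ ⊆ s) (hbdd : BddAbove (f '' closedBall x δ)) : ContinuousAt f x := by
  obtain ⟨M, hM⟩ := hbdd
  have hsub : ∀ n : ℕ, closedBall x (δ / 2 ^ n) ⊆ s := fun n =>
    (closedBall_subset_closedBall (div_le_self hδ.le (one_le_pow₀ one_le_two))).trans hball
  have hx : x ∈ s := hball (mem_closedBall_self hδ.le)
  -- `z` is the midpoint of `x` and `2 * z - x`, so the bound on `f - f x` halves at each step
  have dyadic : ∀ n : ℕ, ∀ z ∈ closedBall x (δ / 2 ^ n), f z - f x ≤ (M - f x) / 2 ^ n := by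
    intro n
    induction n with
    | zero => intro z hz; simpa using hM ⟨z, by simpa using hz, rfl⟩
    | succ n ih =>
      intro z hz
      have hz' : 2 * z - x ∈ closedBall x (δ / 2 ^ n) := by
        rw [mem_closedBall, Real.dist_eq] at hz ⊢
        rw [show 2 * z - x - x = 2 * (z - x) by ring, abs_mul, abs_two]
        rw [pow_succ, ← div_div] at hz
        linarith
      have := hmid x (2 * z - x) hx (hsub n hz')
      rw [show (x + (2 * z - x)) / 2 = z by ring] at this
      simp only [pow_succ, ← div_div]
      linarith [ih _ hz']
  refine Metric.continuousAt_iff.2 fun ε hε => ?_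
  obtain ⟨n, hn⟩ := pow_unbounded_of_one_lt ((M - f x) / ε) one_lt_two
  have hsmall : (M - f x) / 2 ^ n < ε := by
    rw [div_lt_iff₀ (by positivity)]; rw [div_lt_iff₀ hε] at hn; linarith
  refine ⟨δ / 2 ^ n, by positivity, fun y hy => ?_⟩
  have hy : y ∈ closedBall x (δ / 2 ^ n) := le_of_lt hy
  have hy' := two_mul_sub_mem_closedBall hy
  have := hmid y (2 * x - y) (hsub n hy) (hsub n hy')
  rw [show (y + (2 * x - y)) / 2 = x by ring] at this
  rw [Real.dist_eq, abs_sub_lt_iff]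
  constructor <;> linarith [dyadic n y hy, dyadic n _ hy']

theorem nonpos_of_continuousOn_Icc {a b : ℝ} (hmid : MidpointConvexOn (Icc a b) f)
    (hf : ContinuousOn f (Icc a b)) (ha : f a ≤ 0) (hb : f b ≤ 0) : ∀ t ∈ Icc a b, f t ≤ 0 := by
  by_contra! ⟨t, ht, hft⟩
  obtain ⟨c, hc, hmax⟩ := isCompact_Icc.exists_isMaxOn ⟨t, ht⟩ hf
  -- midpoint convexity fails at the leftmost maximiser `c₀` for the pair `c₀ ± h`
  obtain ⟨c₀, ⟨hc₀, hfc₀ : f c₀ = f c⟩, hleast⟩ : ∃ c₀, IsLeast (Icc a b ∩ f ⁻¹' {f c}) c₀ :=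
    (isCompact_Icc.of_isClosed_subset (hf.preimage_isClosed_of_isClosed isClosed_Icc
      isClosed_singleton) inter_subset_left).exists_isLeast ⟨c, hc, mem_singleton _⟩
  have hpos : 0 < f c := hft.trans_le (hmax ht)
  have hac₀ : a < c₀ := hc₀.1.lt_of_ne fun h => by rw [← h] at hfc₀; linarith
  have hc₀b : c₀ < b := hc₀.2.lt_of_ne fun h => by rw [h] at hfc₀; linarith
  set h := min (c₀ - a) (b - c₀)
  have hh : 0 < h := lt_min (by linarith) (by linarith)
  have hl : c₀ - h ∈ Icc a b :=
    ⟨by linarith [min_le_left (c₀ - a) (b - c₀)], by linarith [hc₀.2]⟩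
  have hr : c₀ + h ∈ Icc a b :=
    ⟨by linarith [hc₀.1], by linarith [min_le_right (c₀ - a) (b - c₀)]⟩
  have hlt : f (c₀ - h) < f c := (hmax hl).lt_of_ne fun heq => by
    linarith [hleast ⟨hl, heq⟩]
  have := hmid _ _ hl hr
  rw [show (c₀ - h + (c₀ + h)) / 2 = c₀ by ring, hfc₀] at this
  have hle : f (c₀ + h) ≤ f c := hmax hr
  linarith

theorem convexOn_of_continuousOn (hmid : MidpointConvexOn s f) (hs : Convex ℝ s)
    (hf : ContinuousOn f s) : ConvexOn ℝ s f := by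
  refine LinearOrder.convexOn_of_lt hs fun x hx y hy hxy a b ha hb hab => ?_
  have hIcc : Icc x y ⊆ s := hs.ordConnected.out hx hy
  set chord : ℝ → ℝ := fun t => f x + (t - x) * ((f y - f x) / (y - x))
  have hchord : ∀ p q, 2 * chord ((p + q) / 2) = chord p + chord q := fun p q => by
    simp only [chord]; ring
  have hchord_y : chord y = f y := by
    simp only [chord]; field_simp [(sub_pos.2 hxy).ne']; ring
  have hbelow : ∀ t ∈ Icc x y, f t - chord t ≤ 0 := by
    refine nonpos_of_continuousOn_Icc (fun p q hp hq => ?_) ((hf.mono hIcc).sub (by fun_prop))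
      (by simp [chord]) (by rw [hchord_y, sub_self])
    linarith [hmid p q (hIcc hp) (hIcc hq), hchord p q]
  have hcomb := hbelow _ (convex_Icc x y (left_mem_Icc.2 hxy.le) (right_mem_Icc.2 hxy.le)
    ha.le hb.le hab)
  have hchord_comb : chord (a • x + b • y) = a • f x + b • f y := by
    simp only [chord, smul_eq_mul]
    rw [show a * x + b * y - x = b * (y - x) by linear_combination x * hab]
    field_simp [(sub_pos.2 hxy).ne']
    linear_combination (-f x) * hab
  linarith

theorem convexOn_of_measurable (hmid : MidpointConvexOn s f) (hs : IsOpen s)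
    (hs' : Convex ℝ s) (hf : Measurable f) : ConvexOn ℝ s f :=
  hmid.convexOn_of_continuousOn hs' fun _ hx =>
    let ⟨_, hδ, hball, hbdd⟩ := hmid.exists_closedBall_subset_bddAbove hf hs hx
    (hmid.continuousAt_of_bddAbove hδ hball hbdd).continuousWithinAt

end MidpointConvexOn

namespace StrictMidpointConvexOn

variable {s : Set ℝ} {f : ℝ → ℝ}

theorem midpointConvexOn (hmid : StrictMidpointConvexOn s f) : MidpointConvexOn s f := by
  intro x y hx hy
  rcases eq_or_ne x y with rfl | hxy
  · rw [add_self_div_two, two_mul]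
  · exact (hmid x y hx hy hxy).le

theorem strictConvexOn (hmid : StrictMidpointConvexOn s f) (hconv : ConvexOn ℝ s f) :
    StrictConvexOn ℝ s f := by
  refine ⟨hconv.1, fun x hx y hy hxy a b ha hb hab => ?_⟩
  wlog hba : b ≤ a generalizing x y a b
  · rw [add_comm (a • x), add_comm (a • f x)]
    exact this y hy x hx hxy.symm b a hb ha (by linarith) (by linarith)
  -- `a • x + b • y` is the midpoint of `x` and a point `w` of the segment `[x, y]`
  have hcomb : (a - b) + 2 * b = 1 := by linarith
  have hw := hconv.1 hx hy (by linarith) (by linarith) hcomb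
  have hfw := hconv.2 hx hy (by linarith) (by linarith) hcomb
  simp only [smul_eq_mul] at hw hfw ⊢
  have hxw : x ≠ (a - b) * x + 2 * b * y := fun h => hxy <| by
    have : 2 * b * (y - x) = 0 := by linear_combination -h - x * hab
    linarith [(mul_eq_zero.1 this).resolve_left (by positivity)]
  have := hmid _ _ hx hw hxw
  rw [show (x + ((a - b) * x + 2 * b * y)) / 2 = a * x + b * y by
    linear_combination (-x / 2) * hab] at this
  linear_combination this / 2 + hfw / 2 - f x / 2 * hab

theorem add {g : ℝ → ℝ} (hf : StrictMidpointConvexOn s f) (hg : StrictMidpointConvexOn s g) :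
    StrictMidpointConvexOn s fun z => f z + g z := fun x y hx hy hxy => by
  linarith [hf x y hx hy hxy, hg x y hx hy hxy]

theorem comp_affine {t : Set ℝ} (hf : StrictMidpointConvexOn t f) {a b : ℝ} (ha : a ≠ 0)
    (hst : MapsTo (fun z => b + a * z) s t) : StrictMidpointConvexOn s fun z => f (b + a * z) :=
  fun x y hx hy hxy => by
    have := hf _ _ (hst hx) (hst hy) fun h => hxy (mul_left_cancel₀ ha (add_left_cancel h))
    rwa [show (b + a * x + (b + a * y)) / 2 = b + a * ((x + y) / 2) by ring] at this

end StrictMidpointConvexOn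

def FourPointProperty (g : ℝ → ℝ) (L : ℝ) : Prop :=
  ∀ A B C D : ℝ, A ∈ Ioo 0 L → B ∈ Ioo 0 L → C ∈ Ioo 0 L → D ∈ Ioo 0 L →
    B ≤ A → C ≤ A → D ≤ A → B + C ≤ A + D →
    (g B + g C ≤ g A + g D ∧ (g A + g D = g B + g C ↔ ({A, D} : Set ℝ) = {B, C}))

section FourPoint

variable {G : ℝ → ℝ} {L : ℝ}

theorem StrictConvexOn.add_lt_add_of_add_eq {s : Set ℝ} (hG : StrictConvexOn ℝ s G)
    {p q u v : ℝ} (hp : p ∈ s) (hq : q ∈ s) (hpu : p < u) (huq : u < q) (hv : u + v = p + q) :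
    G u + G v < G p + G q := by
  have hpq : p < q := hpu.trans huq
  have hqp : 0 < q - p := by linarith
  set a := (q - u) / (q - p)
  set b := (u - p) / (q - p)
  have ha : 0 < a := div_pos (by linarith) hqp
  have hb : 0 < b := div_pos (by linarith) hqp
  have hab : a + b = 1 := by simp only [a, b]; field_simp; ring
  have hu : a • p + b • q = u := by simp only [smul_eq_mul, a, b]; field_simp; ring
  have hv' : b • p + a • q = v := by
    simp only [smul_eq_mul, a, b]; field_simp; rw [show v = p + q - u by linarith]; ring
  have h₁ := hG.2 hp hq hpq.ne ha hb hab
  have h₂ := hG.2 hp hq hpq.ne hb ha (by rw [add_comm, hab])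
  rw [hu] at h₁
  rw [hv'] at h₂
  simp only [smul_eq_mul] at h₁ h₂
  linear_combination h₁ + h₂ + (G p + G q) * hab

theorem StrictConvexOn.strictMonoOn_of_even (hG : StrictConvexOn ℝ (Ioo (-L) L) G)
    (heven : ∀ z, G (-z) = G z) : StrictMonoOn G (Ico 0 L) := by
  intro x hx y hy hxy
  have h := hG.add_lt_add_of_add_eq (p := -y) (q := y) (u := x) (v := -x)
    ⟨by linarith [hy.2], by linarith [hy.1, hy.2]⟩ ⟨by linarith [hy.1, hy.2], hy.2⟩
    (by linarith [hx.1]) hxy (by ring)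
  rw [heven, heven] at h
  linarith

theorem StrictConvexOn.add_lt_add_of_pair_ne (hG : StrictConvexOn ℝ (Ioo (-L) L) G)
    (heven : ∀ z, G (-z) = G z) {A B C D : ℝ} (hA : A ∈ Ioo 0 L) (hB : B ∈ Ioo 0 L)
    (hC : C ∈ Ioo 0 L) (hD : D ∈ Ioo 0 L) (hBA : B ≤ A) (hCA : C ≤ A) (hsum : B + C ≤ A + D)
    (hne : ({A, D} : Set ℝ) ≠ {B, C}) : G B + G C < G A + G D := by
  wlog hCB : C ≤ B generalizing B C
  · rw [pair_comm B C] at hne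
    linarith [this hC hB hCA hBA (by linarith) hne (by linarith)]
  have hmono := hG.strictMonoOn_of_even heven
  rcases lt_or_ge D C with hDC | hCD
  -- `(C, B)` is spread out to `(D, B + C - D)`, and `B < B + C - D ≤ A`
  · have hE : B + C - D ∈ Ioo (-L) L := ⟨by linarith [hB.1, hA.1, hA.2], by linarith [hA.2]⟩
    have hspread := hG.add_lt_add_of_add_eq (u := C) (v := B)
      ⟨by linarith [hD.1, hA.2], hD.2⟩ hE hDC (by linarith) (by ring)
    have hEA : G (B + C - D) ≤ G A :=
      hmono.monotoneOn ⟨by linarith [hB.1], by linarith [hA.2]⟩ (Ioo_subset_Ico_self hA)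
        (by linarith)
    linarith
  · have hBA' := hmono.monotoneOn (Ioo_subset_Ico_self hB) (Ioo_subset_Ico_self hA) hBA
    have hCD' := hmono.monotoneOn (Ioo_subset_Ico_self hC) (Ioo_subset_Ico_self hD) hCD
    rcases hBA.lt_or_eq with hBA | rfl
    · linarith [hmono (Ioo_subset_Ico_self hB) (Ioo_subset_Ico_self hA) hBA]
    rcases hCD.lt_or_eq with hCD | rfl
    · linarith [hmono (Ioo_subset_Ico_self hC) (Ioo_subset_Ico_self hD) hCD]
    exact absurd rfl hne

theorem StrictConvexOn.fourPointProperty (hG : StrictConvexOn ℝ (Ioo (-L) L) G)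
    (heven : ∀ z, G (-z) = G z) : FourPointProperty G L := by
  intro A B C D hA hB hC hD hBA hCA _ hsum
  have hpair : ({A, D} : Set ℝ) = {B, C} → G A + G D = G B + G C := by
    intro h
    rcases pair_eq_pair_iff.1 h with ⟨rfl, rfl⟩ | ⟨rfl, rfl⟩ <;> ring
  by_cases h : ({A, D} : Set ℝ) = {B, C}
  · exact ⟨(hpair h).ge, iff_of_true (hpair h) h⟩
  · have hlt := hG.add_lt_add_of_pair_ne heven hA hB hC hD hBA hCA hsum h
    exact ⟨hlt.le, iff_of_false hlt.ne' h⟩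

end FourPoint

namespace FourPointProperty

variable {g : ℝ → ℝ} {L : ℝ}

theorem strictMonoOn (h : FourPointProperty g L) : StrictMonoOn g (Ioo 0 L) := by
  intro x hx y hy hxy
  obtain ⟨hle, heq⟩ := h y x x x hy hx hx hx hxy.le hxy.le hxy.le (by linarith)
  refine (le_of_add_le_add_right hle).lt_of_ne fun hxy' => hxy.ne' ?_
  have := heq.1 (by rw [hxy'])
  simpa using (pair_eq_pair_iff.1 this)

theorem midpointConvexOn (h : FourPointProperty g L) : MidpointConvexOn (Ioo 0 L) g := by
  intro x y hx hy
  wlog hxy : x ≤ y generalizing x y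
  · rw [add_comm x, add_comm (g x)]
    exact this y x hy hx (by linarith)
  have hm : (x + y) / 2 ∈ Ioo 0 L := ⟨by linarith [hx.1], by linarith [hy.2]⟩
  have := (h y _ _ x hy hm hm hx (by linarith) (by linarith) hxy (by linarith)).1
  linarith

end FourPointProperty

def symmSum (f : ℝ → ℝ) (m t : ℝ) : ℝ := f (m + t) + f (m - t)

section SymmSum

variable {f : ℝ → ℝ}

theorem two_mul_symmSum_lt (hmono : ∀ m, 0 < m → StrictMonoOn (symmSum f m) (Ioo 0 m))
    (hmid : ∀ m, 0 < m → MidpointConvexOn (Ioo 0 m) (symmSum f m)) {m t : ℝ} (ht : 0 < t)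
    (htm : t < m / 2) : 2 * symmSum f m t < 2 * f m + symmSum f m (2 * t) := by
  have h₁ := hmono (m + t) (by linarith) ⟨half_pos ht, by linarith⟩ ⟨ht, by linarith⟩
    (half_lt_self ht)
  have h₂ := hmono (m - t) (by linarith) ⟨half_pos ht, by linarith⟩ ⟨ht, by linarith⟩
    (half_lt_self ht)
  have h₃ := hmid m (by linarith) (t / 2) (3 * t / 2) ⟨half_pos ht, by linarith⟩
    ⟨by linarith, by linarith⟩
  simp only [symmSum] at h₁ h₂ h₃ ⊢
  ring_nf at h₁ h₂ h₃ ⊢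
  linarith

theorem two_mul_add_le_symmSum_add_symmSum
    (hmid : ∀ m, 0 < m → MidpointConvexOn (Ioo 0 m) (symmSum f m)) {m h : ℝ} (hh : 0 < h)
    (hhm : h < m / 2) : 2 * (f m + f (2 * m)) ≤ symmSum f m h + symmSum f (2 * m) h := by
  have := hmid (3 * m / 2) (by linarith) (m / 2 - h) (m / 2 + h) ⟨by linarith, by linarith⟩
    ⟨by linarith, by linarith⟩
  simp only [symmSum] at this ⊢
  ring_nf at this ⊢
  linarith

theorem exists_symmSum_lt_add (hmono : ∀ m, 0 < m → StrictMonoOn (symmSum f m) (Ioo 0 m))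
    (hmid : ∀ m, 0 < m → MidpointConvexOn (Ioo 0 m) (symmSum f m)) {m h₀ d : ℝ} (hh₀ : 0 < h₀)
    (hh₀m : h₀ < m / 2) (hd : 0 < d) : ∃ h ∈ Ioc 0 h₀, symmSum f m h < 2 * f m + d := by
  -- each halving of `h` at least halves the excess of `symmSum f m h` over `2 * f m`
  have halving : ∀ k : ℕ,
      symmSum f m (h₀ / 2 ^ k) - 2 * f m ≤ (symmSum f m h₀ - 2 * f m) / 2 ^ k := by
    intro k
    induction k with
    | zero => simp
    | succ k ih =>
      set t := h₀ / 2 ^ k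
      have ht : 0 < t := by positivity
      have htm : t / 2 < m / 2 := by
        linarith [div_le_self hh₀.le (one_le_pow₀ (one_le_two (α := ℝ)) (n := k))]
      have := two_mul_symmSum_lt hmono hmid (half_pos ht) htm
      rw [show 2 * (t / 2) = t by ring] at this
      simp only [pow_succ, ← div_div]
      linarith
  obtain ⟨k, hk⟩ := pow_unbounded_of_one_lt ((symmSum f m h₀ - 2 * f m) / d) one_lt_two
  refine ⟨h₀ / 2 ^ k, ⟨by positivity, div_le_self hh₀.le (one_le_pow₀ one_le_two)⟩, ?_⟩
  have : (symmSum f m h₀ - 2 * f m) / 2 ^ k < d := by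
    rw [div_lt_iff₀ (by positivity)]; rw [div_lt_iff₀ hd] at hk; linarith
  linarith [halving k]

theorem two_mul_le_symmSum (hmono : ∀ m, 0 < m → StrictMonoOn (symmSum f m) (Ioo 0 m))
    (hmid : ∀ m, 0 < m → MidpointConvexOn (Ioo 0 m) (symmSum f m)) {m s : ℝ} (hs : 0 < s)
    (hsm : s < m) : 2 * f m ≤ symmSum f m s := by
  refine le_of_forall_pos_lt_add fun d hd => ?_
  have hm : 0 < m := hs.trans hsm
  have hh₀ : 0 < min s (m / 2) / 2 := by positivity
  obtain ⟨h, hh, hfh⟩ := exists_symmSum_lt_add (m := 2 * m) hmono hmid hh₀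
    (by linarith [min_le_right s (m / 2)]) hd
  have hhs : h < s := by linarith [hh.2, min_le_left s (m / 2)]
  have hhm : h < m / 2 := by linarith [hh.2, min_le_right s (m / 2)]
  have := two_mul_add_le_symmSum_add_symmSum hmid hh.1 hhm
  linarith [hmono m (by linarith) ⟨hh.1, by linarith⟩ ⟨hs, hsm⟩ hhs]

theorem strictMidpointConvexOn_of_symmSum
    (hmono : ∀ m, 0 < m → StrictMonoOn (symmSum f m) (Ioo 0 m))
    (hmid : ∀ m, 0 < m → MidpointConvexOn (Ioo 0 m) (symmSum f m)) :
    StrictMidpointConvexOn (Ioi 0) f := by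
  intro x y hx hy hxy
  wlog hyx : y < x generalizing x y
  · rw [add_comm x, add_comm (f x)]
    exact this y x hy hx hxy.symm (lt_of_le_of_ne (not_lt.1 hyx) hxy)
  have hx : 0 < x := hx
  have hy : 0 < y := hy
  set m := (x + y) / 2
  set r := (x - y) / 2
  have hr : 0 < r := by simp only [r]; linarith
  have hrm : r < m := by simp only [r, m]; linarith
  have hsymm : symmSum f m r = f x + f y := by
    simp only [symmSum, m, r]; ring_nf
  calc 2 * f m ≤ symmSum f m (r / 2) :=
        two_mul_le_symmSum hmono hmid (half_pos hr) (by linarith)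
    _ < symmSum f m r :=
        hmono m (by linarith) ⟨half_pos hr, by linarith⟩ ⟨hr, hrm⟩ (half_lt_self hr)
    _ = f x + f y := hsymm

end SymmSum

theorem gaux_eq (K : ℝ → ℝ) {c₁ : ℝ} (hc₁ : 0 ≤ c₁) (c₂ z : ℝ) :
    gaux K c₁ c₂ z = K √(c₁ ^ 2 + c₁ ^ 2 * c₂ * z) + K √(c₁ ^ 2 + -(c₁ ^ 2 * c₂) * z) := by
  rw [gaux, ← Real.sqrt_sq hc₁, ← Real.sqrt_mul (sq_nonneg _), ← Real.sqrt_mul (sq_nonneg _),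
    Real.sqrt_sq hc₁]
  ring_nf

theorem gaux_neg (K : ℝ → ℝ) (c₁ c₂ z : ℝ) : gaux K c₁ c₂ (-z) = gaux K c₁ c₂ z := by
  simp only [gaux, mul_neg, sub_neg_eq_add, ← sub_eq_add_neg]
  exact add_comm _ _

theorem gaux_sqrt_one_div (K : ℝ → ℝ) {m : ℝ} (hm : 0 < m) :
    gaux K √m (1 / m) = symmSum (fun τ => K √τ) m := by
  ext t
  rw [gaux_eq K (Real.sqrt_nonneg m), Real.sq_sqrt hm.le, symmSum]
  field_simp
  ring_nf

theorem strictConvexOn_gaux {K : ℝ → ℝ} (hK : Measurable K)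
    (hconv : StrictMidpointConvexOn (Ioi 0) fun τ => K √τ) {c₁ c₂ : ℝ} (hc₁ : 0 < c₁)
    (hc₂ : 0 < c₂) : StrictConvexOn ℝ (Ioo (-(1 / c₂)) (1 / c₂)) (gaux K c₁ c₂) := by
  have hbound : ∀ z ∈ Ioo (-(1 / c₂)) (1 / c₂), -1 < c₂ * z ∧ c₂ * z < 1 := fun z hz => by
    have h₁ := mul_lt_mul_of_pos_left hz.1 hc₂
    have h₂ := mul_lt_mul_of_pos_left hz.2 hc₂
    simp only [mul_neg, mul_one_div_cancel hc₂.ne'] at h₁ h₂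
    exact ⟨h₁, h₂⟩
  have hmid : StrictMidpointConvexOn (Ioo (-(1 / c₂)) (1 / c₂)) (gaux K c₁ c₂) := by
    rw [funext (gaux_eq K hc₁.le c₂)]
    refine (hconv.comp_affine (by positivity) fun z hz => ?_).add
      (hconv.comp_affine (by simp [hc₁.ne', hc₂.ne']) fun z hz => ?_)
    · have := (hbound z hz).1
      show 0 < c₁ ^ 2 + c₁ ^ 2 * c₂ * z
      nlinarith [sq_pos_of_pos hc₁]
    · have := (hbound z hz).2
      show 0 < c₁ ^ 2 + -(c₁ ^ 2 * c₂) * z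
      nlinarith [sq_pos_of_pos hc₁]
  exact hmid.strictConvexOn (hmid.midpointConvexOn.convexOn_of_measurable isOpen_Ioo
    (convex_Ioo _ _) (by unfold gaux; fun_prop))

theorem statement_17_general (K : ℝ → ℝ) (hKmeas : Measurable K) :
    (∀ τ₁ τ₂ : ℝ, 0 < τ₁ → 0 < τ₂ → τ₁ ≠ τ₂ →
        2 * K (Real.sqrt ((τ₁ + τ₂) / 2)) < K (Real.sqrt τ₁) + K (Real.sqrt τ₂))
    ↔
    (∀ c₁ c₂ : ℝ, 0 < c₁ → 0 < c₂ →
      ∀ A B C D : ℝ, A ∈ Set.Ioo 0 (1 / c₂) → B ∈ Set.Ioo 0 (1 / c₂) →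
        C ∈ Set.Ioo 0 (1 / c₂) → D ∈ Set.Ioo 0 (1 / c₂) →
        B ≤ A → C ≤ A → D ≤ A → B + C ≤ A + D →
        (gaux K c₁ c₂ B + gaux K c₁ c₂ C ≤ gaux K c₁ c₂ A + gaux K c₁ c₂ D ∧
          (gaux K c₁ c₂ A + gaux K c₁ c₂ D = gaux K c₁ c₂ B + gaux K c₁ c₂ C ↔
            ({A, D} : Set ℝ) = {B, C}))) := by
  constructor
  · intro hK c₁ c₂ hc₁ hc₂
    exact (strictConvexOn_gaux hKmeas hK hc₁ hc₂).fourPointProperty (gaux_neg K c₁ c₂)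
  · intro H
    have hsymm : ∀ m, 0 < m → FourPointProperty (symmSum (fun τ => K √τ) m) m := fun m hm => by
      have h : FourPointProperty (gaux K √m (1 / m)) (1 / (1 / m)) :=
        H √m (1 / m) (Real.sqrt_pos.2 hm) (one_div_pos.2 hm)
      rwa [gaux_sqrt_one_div K hm, one_div_one_div] at h
    exact strictMidpointConvexOn_of_symmSum (fun m hm => (hsymm m hm).strictMonoOn)
      fun m hm => (hsymm m hm).midpointConvexOn

/-- Characterization of the strict convexity of `τ ↦ K(√τ)` via a four-point inequality
for the functions `g(z) = K(c₁√(1 + c₂ z)) + K(c₁√(1 − c₂ z))`, together with the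
characterization of the equality cases. -/
theorem statement_17 (K : ℝ → ℝ) (hKmeas : Measurable K)
    (hKpos : ∀ τ : ℝ, 0 < τ → 0 < K τ) :
    (∀ τ₁ τ₂ : ℝ, 0 < τ₁ → 0 < τ₂ → τ₁ ≠ τ₂ →
        2 * K (Real.sqrt ((τ₁ + τ₂) / 2)) < K (Real.sqrt τ₁) + K (Real.sqrt τ₂))
    ↔
    (∀ c₁ c₂ : ℝ, 0 < c₁ → 0 < c₂ →
      ∀ A B C D : ℝ, A ∈ Set.Ioo 0 (1 / c₂) → B ∈ Set.Ioo 0 (1 / c₂) →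
        C ∈ Set.Ioo 0 (1 / c₂) → D ∈ Set.Ioo 0 (1 / c₂) →
        B ≤ A → C ≤ A → D ≤ A → B + C ≤ A + D →
        (gaux K c₁ c₂ B + gaux K c₁ c₂ C ≤ gaux K c₁ c₂ A + gaux K c₁ c₂ D ∧
          (gaux K c₁ c₂ A + gaux K c₁ c₂ D = gaux K c₁ c₂ B + gaux K c₁ c₂ C ↔
            ({A, D} : Set ℝ) = {B, C}))) :=
  statement_17_general K hKmeas
end
end

section
/- Equivalent formulations of convexity for nondecreasing functions. Let 0 < M ≤ +∞ and let h : (0, M) → ℝ be measurable and nondecreasing. The following are equivalent. (a) h is convex on (0, M). (b) For every 0 ≤ L ≤ 2M, the function h_L(x) := h(x) + h(L − x) is convex on the interval (max{L − M, 0}, min{L, M}). (c) For all A, B, C, D ∈ (0, M) with A = max{A, B, C, D} and A + D ≥ B + C, one has h(A) + h(D) ≥ h(B) + h(C). -/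
open scoped ENNReal

noncomputable section

/-- The interval `(0, M)` with `M ∈ (0, +∞]`, as a subset of `ℝ`. -/
def intervalOM (M : ℝ≥0∞) : Set ℝ := {x : ℝ | 0 < x ∧ ENNReal.ofReal x < M}

/-!
(a) ⇒ (b): `h_L` is the sum of `h` and of `h` composed with the reflection `x ↦ L - x`.

(b) ⇒ (c): put `L = B + C` and `x₀ = max(B, C, L - D)`. The convex function `h_L` is symmetric
about `L / 2`, so on `[L - x₀, x₀]`, which contains `B` and `C`, it is bounded by its value
`h(x₀) + h(L - x₀)` at the endpoints; monotonicity then moves `x₀` up to `A` and `L - x₀` up to `D`.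

(c) ⇒ (a): `B = C` gives midpoint convexity. Along a segment, the convexity inequality then holds
at all dyadic weights, and since `h` is monotone it passes to the limit along dyadic weights
increasing to the given one.
-/

open Set Filter Topology

instance ordConnected_intervalOM (M : ℝ≥0∞) : (intervalOM M).OrdConnected :=
  ⟨fun _ hx _ hy _ hz => ⟨hx.1.trans_le hz.1, (ENNReal.ofReal_le_ofReal hz.2).trans_lt hy.2⟩⟩

theorem intervalOM_top : intervalOM ⊤ = Ioi 0 := by
  ext x
  simp [intervalOM]

theorem mem_intervalOM_iff {M : ℝ≥0∞} (hM : M ≠ ⊤) {x : ℝ} :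
    x ∈ intervalOM M ↔ 0 < x ∧ x < M.toReal :=
  and_congr_right fun hx => ENNReal.ofReal_lt_iff_lt_toReal hx.le hM

theorem ofReal_add_le_two_mul {M : ℝ≥0∞} {x y : ℝ} (hx : x ∈ intervalOM M)
    (hy : y ∈ intervalOM M) : ENNReal.ofReal (x + y) ≤ 2 * M :=
  calc ENNReal.ofReal (x + y) ≤ ENNReal.ofReal x + ENNReal.ofReal y := ENNReal.ofReal_add_le
    _ ≤ M + M := add_le_add hx.2.le hy.2.le
    _ = 2 * M := (two_mul M).symm

theorem setOf_domain_eq (M : ℝ≥0∞) (L : ℝ) :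
    {x : ℝ | (if M = ⊤ then 0 else max (L - M.toReal) 0) < x ∧
        x < (if M = ⊤ then L else min L M.toReal)} =
      {x | x ∈ intervalOM M ∧ L - x ∈ intervalOM M} := by
  ext x
  by_cases hM : M = ⊤
  · simp [hM, intervalOM_top, and_comm]
  · simp only [hM, if_false, mem_ofPred_eq, mem_intervalOM_iff hM, max_lt_iff, lt_min_iff]
    constructor <;> intro <;> refine ⟨⟨?_, ?_⟩, ?_, ?_⟩ <;> linarith

theorem natCast_div_two_pow_mem_of_midpoint_mem {T : Set ℝ} (h0 : (0 : ℝ) ∈ T) (h1 : (1 : ℝ) ∈ T)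
    (hmid : ∀ s ∈ T, ∀ t ∈ T, (s + t) / 2 ∈ T) : ∀ n k : ℕ, k ≤ 2 ^ n → (k : ℝ) / 2 ^ n ∈ T
  | 0, k, hk => by
    interval_cases k <;> simpa
  | n + 1, k, hk => by
    have hk' : k - min k (2 ^ n) ≤ 2 ^ n := by rw [pow_succ] at hk; omega
    have hsplit : (k : ℝ) / 2 ^ (n + 1) =
        ((min k (2 ^ n) : ℕ) / 2 ^ n + ((k - min k (2 ^ n) : ℕ) : ℝ) / 2 ^ n) / 2 := by
      rw [← add_div, ← Nat.cast_add, Nat.add_sub_cancel' (min_le_left _ _), pow_succ, div_div]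
    rw [hsplit]
    exact hmid _ (natCast_div_two_pow_mem_of_midpoint_mem h0 h1 hmid n _ (min_le_right _ _)) _
      (natCast_div_two_pow_mem_of_midpoint_mem h0 h1 hmid n _ hk')

theorem ConvexOn.of_monotoneOn_of_midpoint {S : Set ℝ} {f : ℝ → ℝ} (hS : Convex ℝ S)
    (hmono : MonotoneOn f S) (hmid : ∀ x ∈ S, ∀ y ∈ S, f ((x + y) / 2) ≤ (f x + f y) / 2) :
    ConvexOn ℝ S f := by
  refine LinearOrder.convexOn_of_lt hS fun x hx y hy hxy a b ha hb hab => ?_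
  obtain rfl : b = 1 - a := by linarith
  simp only [smul_eq_mul]
  set p : ℝ → ℝ := fun t => t * x + (1 - t) * y with hp
  have hpS : ∀ t ∈ Icc (0 : ℝ) 1, p t ∈ S := fun t ht =>
    hS hx hy ht.1 (sub_nonneg.2 ht.2) (add_sub_cancel t 1)
  set T := {t ∈ Icc (0 : ℝ) 1 | f (p t) ≤ t * f x + (1 - t) * f y}
  have hT : ∀ n k : ℕ, k ≤ 2 ^ n → (k : ℝ) / 2 ^ n ∈ T := by
    refine natCast_div_two_pow_mem_of_midpoint_mem (by simp [T, p]) (by simp [T, p]) ?_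
    rintro s ⟨hs, hfs⟩ t ⟨ht, hft⟩
    have hmem : (s + t) / 2 ∈ Icc (0 : ℝ) 1 := ⟨by linarith [hs.1, ht.1], by linarith [hs.2, ht.2]⟩
    have hpm : p ((s + t) / 2) = (p s + p t) / 2 := by simp only [hp]; ring
    refine ⟨hmem, ?_⟩
    have := hmid _ (hpS s hs) _ (hpS t ht)
    rw [hpm]
    linarith
  set t : ℕ → ℝ := fun n => (⌊a * 2 ^ n⌋₊ : ℝ) / 2 ^ n
  have ht_le : ∀ n, t n ≤ a := fun n =>
    (div_le_iff₀ (by positivity)).2 (Nat.floor_le (by positivity))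
  have htT : ∀ n, t n ∈ T := fun n => hT n _ <| Nat.floor_le_of_le <| by
    push_cast
    nlinarith [pow_pos (two_pos (α := ℝ)) n]
  have hbound : ∀ n, f (p a) ≤ t n * f x + (1 - t n) * f y := fun n =>
    (hmono (hpS a ⟨ha.le, by linarith⟩) (hpS _ (htT n).1)
      (by nlinarith [ht_le n])).trans (htT n).2
  have htend : Tendsto t atTop (𝓝 a) :=
    (tendsto_nat_floor_mul_div_atTop ha.le).comp (tendsto_pow_atTop_atTop_of_one_lt one_lt_two)
  exact ge_of_tendsto' ((htend.mul_const _).add ((tendsto_const_nhds.sub htend).mul_const _))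
    hbound

theorem ConvexOn.add_comp_const_sub {S : Set ℝ} {f : ℝ → ℝ} (hf : ConvexOn ℝ S f) (L : ℝ) :
    ConvexOn ℝ {x | x ∈ S ∧ L - x ∈ S} (fun x => f x + f (L - x)) := by
  have hrefl : ConvexOn ℝ ((fun x => L - x) ⁻¹' S) (fun x => f (L - x)) :=
    hf.comp_affineMap (AffineMap.const ℝ ℝ L - AffineMap.id ℝ ℝ)
  exact (hf.subset (fun _ hx => hx.1) (hf.1.inter hrefl.1)).add
    (hrefl.subset (fun _ hx => hx.2) (hf.1.inter hrefl.1))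

theorem ConvexOn.add_comp_const_sub_le {T : Set ℝ} {f : ℝ → ℝ} {L x z : ℝ}
    (hf : ConvexOn ℝ T (fun x => f x + f (L - x))) (hx : x ∈ T) (hLx : L - x ∈ T)
    (hz : z ∈ Icc (L - x) x) : f z + f (L - z) ≤ f x + f (L - x) := by
  have := hf.le_on_segment hLx hx (segment_eq_Icc (hz.1.trans hz.2) ▸ hz)
  simpa only [sub_sub_cancel, add_comm (f (L - x)), max_self] using this

theorem add_le_add_of_convexOn_add_comp_const_sub {S : Set ℝ} [S.OrdConnected] {f : ℝ → ℝ}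
    (hmono : MonotoneOn f S) {A B C D : ℝ} (hA : A ∈ S) (hB : B ∈ S) (hC : C ∈ S) (hD : D ∈ S)
    (hBA : B ≤ A) (hCA : C ≤ A) (hBC : B + C ≤ A + D)
    (hf : ConvexOn ℝ {x | x ∈ S ∧ B + C - x ∈ S} (fun x => f x + f (B + C - x))) :
    f B + f C ≤ f A + f D := by
  set x₀ := max (max B C) (B + C - D) with hx₀
  have hx₀A : x₀ ≤ A := max_le (max_le hBA hCA) (by linarith)
  have hx₀S : x₀ ∈ S := Set.Icc_subset S hB hA ⟨le_max_of_le_left (le_max_left _ _), hx₀A⟩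
  have hLx₀ : B + C - x₀ ∈ S := by
    rcases max_choice (max B C) (B + C - D) with h | h <;> rw [hx₀, h]
    · rcases max_choice B C with h' | h' <;> rw [h'] <;> simpa
    · simpa
  have hsum := hf.add_comp_const_sub_le ⟨hx₀S, hLx₀⟩ ⟨hLx₀, by simpa⟩
    (z := B) ⟨by linarith [le_max_right B C, le_max_left (max B C) (B + C - D)],
      le_max_of_le_left (le_max_left _ _)⟩
  rw [add_sub_cancel_left] at hsum
  have hDx₀ : B + C - x₀ ≤ D := by linarith [le_max_right (max B C) (B + C - D)]
  linarith [hmono hx₀S hA hx₀A, hmono hLx₀ hD hDx₀]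

theorem statement_18_general (M : ℝ≥0∞) (h : ℝ → ℝ)
    (hmono : ∀ x ∈ intervalOM M, ∀ y ∈ intervalOM M, x ≤ y → h x ≤ h y) :
    ((ConvexOn ℝ (intervalOM M) h) ↔
      (∀ L : ℝ, 0 ≤ L → ENNReal.ofReal L ≤ 2 * M →
        ConvexOn ℝ
          {x : ℝ | (if M = ⊤ then 0 else max (L - M.toReal) 0) < x ∧
            x < (if M = ⊤ then L else min L M.toReal)}
          (fun x => h x + h (L - x)))) ∧
    ((ConvexOn ℝ (intervalOM M) h) ↔
      (∀ A B C D : ℝ, A ∈ intervalOM M → B ∈ intervalOM M → C ∈ intervalOM M →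
        D ∈ intervalOM M → B ≤ A → C ≤ A → D ≤ A → B + C ≤ A + D →
        h B + h C ≤ h A + h D)) := by
  have hmonoOn : MonotoneOn h (intervalOM M) := fun x hx y hy => hmono x hx y hy
  simp_rw [setOf_domain_eq]
  have hab (hc : ConvexOn ℝ (intervalOM M) h) (L : ℝ) (_ : 0 ≤ L)
      (_ : ENNReal.ofReal L ≤ 2 * M) :=
    hc.add_comp_const_sub L
  have hbc := fun (hb : ∀ L : ℝ, 0 ≤ L → ENNReal.ofReal L ≤ 2 * M →
      ConvexOn ℝ {x | x ∈ intervalOM M ∧ L - x ∈ intervalOM M} (fun x => h x + h (L - x)))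
      A B C D (hA : A ∈ intervalOM M) (hB : B ∈ intervalOM M) (hC : C ∈ intervalOM M)
      (hD : D ∈ intervalOM M) (hBA : B ≤ A) (hCA : C ≤ A) (_ : D ≤ A) (hBC : B + C ≤ A + D) =>
    add_le_add_of_convexOn_add_comp_const_sub hmonoOn hA hB hC hD hBA hCA hBC <|
      hb (B + C) (add_nonneg hB.1.le hC.1.le) (ofReal_add_le_two_mul hB hC)
  have hca (hc : ∀ A B C D : ℝ, A ∈ intervalOM M → B ∈ intervalOM M → C ∈ intervalOM M →
      D ∈ intervalOM M → B ≤ A → C ≤ A → D ≤ A → B + C ≤ A + D → h B + h C ≤ h A + h D) :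
      ConvexOn ℝ (intervalOM M) h := by
    refine .of_monotoneOn_of_midpoint (ordConnected_intervalOM M).convex hmonoOn ?_
    intro x hx y hy
    wlog hxy : x ≤ y generalizing x y
    · rw [add_comm x, add_comm (h x)]
      exact this y hy x hx (le_of_not_ge hxy)
    have hm : (x + y) / 2 ∈ intervalOM M := Set.Icc_subset _ hx hy ⟨by linarith, by linarith⟩
    linarith [hc y _ _ x hy hm hm hx (by linarith) (by linarith) hxy (by linarith)]
  exact ⟨⟨hab, fun hb => hca (hbc hb)⟩, ⟨fun ha => hbc (hab ha), hca⟩⟩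

/-- Equivalent formulations of convexity for nondecreasing functions `h : (0, M) → ℝ`:
(a) `h` is convex; (b) for every `0 ≤ L ≤ 2M`, `h_L(x) = h(x) + h(L - x)` is convex on
`(max{L - M, 0}, min{L, M})`; (c) the four-point inequality
`h(A) + h(D) ≥ h(B) + h(C)` holds whenever `A = max{A,B,C,D}` and `A + D ≥ B + C`. -/
theorem statement_18 (M : ℝ≥0∞) (hM : 0 < M) (h : ℝ → ℝ)
    (hmeas : Measurable h)
    (hmono : ∀ x ∈ intervalOM M, ∀ y ∈ intervalOM M, x ≤ y → h x ≤ h y) :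
    ((ConvexOn ℝ (intervalOM M) h) ↔
      (∀ L : ℝ, 0 ≤ L → ENNReal.ofReal L ≤ 2 * M →
        ConvexOn ℝ
          {x : ℝ | (if M = ⊤ then 0 else max (L - M.toReal) 0) < x ∧
            x < (if M = ⊤ then L else min L M.toReal)}
          (fun x => h x + h (L - x)))) ∧
    ((ConvexOn ℝ (intervalOM M) h) ↔
      (∀ A B C D : ℝ, A ∈ intervalOM M → B ∈ intervalOM M → C ∈ intervalOM M →
        D ∈ intervalOM M → B ≤ A → C ≤ A → D ≤ A → B + C ≤ A + D →
        h B + h C ≤ h A + h D)) :=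
  statement_18_general M h hmono
end
end

section
/- Four-point inequalities for bilinear combinations. Let α, β ∈ ℝ with α ≥ |β|, and let a, b, p, q ∈ ℝ with a > b ≥ 0 and p > q ≥ 0. Define A := a p α + b q β, B := a q α + b p β, C := b p α + a q β, D := b q α + a p β. Then: (1) |A| ≥ |B|, |A| ≥ |C|, |A| ≥ |D|, and |A| + |D| ≥ |B| + |C|. (2) If the unordered pairs {|A|, |D|} and {|B|, |C|} coincide, then necessarily α = β = 0. -/
/-!
With `u = (α + β) / 2 ≥ 0` and `v = (α - β) / 2 ≥ 0` the four combinations split as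
`A = X + Y`, `D = X - Y`, `B = X' + Y'`, `C = X' - Y'` with
`X = (ap + bq) u`, `Y = (ap - bq) v`, `X' = (aq + bp) u`, `Y' = (aq - bp) v`.
Since `a > b ≥ 0` and `p > q ≥ 0` we have `|aq + bp| < ap + bq` and `|aq - bp| < ap - bq`,
so `|X'| ≤ X` and `|Y'| ≤ Y`. For such a dominated pair the triangle inequality gives
`|X' ± Y'| ≤ X + Y = |A|`, with equality only if `|X'| = X` and `|Y'| = Y`, which by the strict
inequalities forces `u = v = 0`; and `|s + t| + |s - t| = 2 max |s| |t|` is monotone in `|s|, |t|`.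
-/

theorem abs_add_add_abs_sub (u v : ℝ) : |u + v| + |u - v| = 2 * max |u| |v| := by
  wlog h : |u| ≤ |v| generalizing u v
  · rw [add_comm u, abs_sub_comm, max_comm]; exact this v u (le_of_not_ge h)
  rw [max_eq_right h]
  obtain ⟨hu₁, hu₂⟩ := abs_le.mp h
  rcases abs_cases v with ⟨hv, -⟩ | ⟨hv, -⟩ <;> rw [hv] at hu₁ hu₂ ⊢
  · rw [abs_of_nonneg (by linarith), abs_of_nonpos (by linarith)]; ring
  · rw [abs_of_nonpos (by linarith), abs_of_nonneg (by linarith)]; ring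

section DominatedPair

variable {x y x' y' : ℝ}

theorem abs_add_abs_sub_le_of_abs_le (hx : |x'| ≤ x) (hy : |y'| ≤ y) :
    |x' + y'| + |x' - y'| ≤ |x + y| + |x - y| := by
  rw [abs_add_add_abs_sub, abs_add_add_abs_sub]
  gcongr 2 * ?_
  exact max_le_max (hx.trans (le_abs_self x)) (hy.trans (le_abs_self y))

theorem abs_eq_of_abs_add_eq_add (hx : |x'| ≤ x) (hy : |y'| ≤ y) (h : |x' + y'| = x + y) :
    |x'| = x ∧ |y'| = y := by
  constructor <;> linarith [abs_add_le x' y']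

theorem abs_eq_of_abs_sub_eq_add (hx : |x'| ≤ x) (hy : |y'| ≤ y) (h : |x' - y'| = x + y) :
    |x'| = x ∧ |y'| = y := by
  rw [sub_eq_add_neg] at h
  rw [← abs_neg y'] at hy ⊢
  exact abs_eq_of_abs_add_eq_add hx hy h

theorem four_point_of_abs_le (hx : |x'| ≤ x) (hy : |y'| ≤ y) :
    (|x' + y'| ≤ |x + y| ∧ |x' - y'| ≤ |x + y| ∧ |x - y| ≤ |x + y| ∧
      |x' + y'| + |x' - y'| ≤ |x + y| + |x - y|) ∧
    (({|x + y|, |x - y|} : Set ℝ) = {|x' + y'|, |x' - y'|} → |x'| = x ∧ |y'| = y) := by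
  have hx₀ : |x| ≤ x := (abs_of_nonneg ((abs_nonneg x').trans hx)).le
  have hy₀ : |y| ≤ y := (abs_of_nonneg ((abs_nonneg y').trans hy)).le
  have hxy : |x + y| = x + y := abs_of_nonneg (by linarith [abs_nonneg x, abs_nonneg y])
  rw [hxy]
  refine ⟨⟨(abs_add_le x' y').trans (add_le_add hx hy), (abs_sub x' y').trans (add_le_add hx hy),
    (abs_sub x y).trans (add_le_add hx₀ hy₀), hxy ▸ abs_add_abs_sub_le_of_abs_le hx hy⟩, ?_⟩
  intro hpairs
  have hmem : x + y ∈ ({|x' + y'|, |x' - y'|} : Set ℝ) := hpairs ▸ Set.mem_insert _ _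
  rcases hmem with h | h
  · exact abs_eq_of_abs_add_eq_add hx hy h.symm
  · exact abs_eq_of_abs_sub_eq_add hx hy h.symm

end DominatedPair

theorem abs_mul_le_mul_of_abs_le {c d w : ℝ} (hcd : |c| ≤ d) (hw : 0 ≤ w) : |c * w| ≤ d * w := by
  rw [abs_mul, abs_of_nonneg hw]
  exact mul_le_mul_of_nonneg_right hcd hw

theorem eq_zero_of_abs_mul_eq_mul {c d w : ℝ} (hcd : |c| < d) (h : |c * w| = d * w) : w = 0 := by
  rw [abs_mul] at h
  rcases abs_cases w with ⟨hw, -⟩ | ⟨hw, -⟩ <;> nlinarith [abs_nonneg c]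

section Rearrangement

variable {a b p q : ℝ}

theorem abs_mul_add_mul_lt (hb : 0 ≤ b) (hab : b < a) (hq : 0 ≤ q) (hpq : q < p) :
    |a * q + b * p| < a * p + b * q := by
  rw [abs_lt]
  constructor
  · nlinarith [mul_pos (by linarith : 0 < a + b) (by linarith : 0 < p + q)]
  · nlinarith [mul_pos (sub_pos.2 hab) (sub_pos.2 hpq)]

theorem abs_mul_sub_mul_lt (hb : 0 ≤ b) (hab : b < a) (hq : 0 ≤ q) (hpq : q < p) :
    |a * q - b * p| < a * p - b * q := by
  rw [abs_lt]
  constructor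
  · nlinarith [mul_pos (sub_pos.2 hab) (by linarith : 0 < p + q)]
  · nlinarith [mul_pos (by linarith : 0 < a + b) (sub_pos.2 hpq)]

end Rearrangement

/-- Four-point inequalities for the bilinear combinations
`A = apα + bqβ`, `B = aqα + bpβ`, `C = bpα + aqβ`, `D = bqα + apβ`,
where `α ≥ |β|`, `a > b ≥ 0` and `p > q ≥ 0` (corresponding to
`(a,b,p,q) = (|x'|, |x''|, |y'|, |y''|)` with `x, y ∈ 𝒪`). -/
theorem statement_19 (α β a b p q : ℝ) (hαβ : |β| ≤ α)
    (hb : 0 ≤ b) (hab : b < a) (hq : 0 ≤ q) (hpq : q < p) :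
    (|a * q * α + b * p * β| ≤ |a * p * α + b * q * β| ∧
     |b * p * α + a * q * β| ≤ |a * p * α + b * q * β| ∧
     |b * q * α + a * p * β| ≤ |a * p * α + b * q * β| ∧
     |a * q * α + b * p * β| + |b * p * α + a * q * β|
        ≤ |a * p * α + b * q * β| + |b * q * α + a * p * β|) ∧
    (({|a * p * α + b * q * β|, |b * q * α + a * p * β|} : Set ℝ)
        = {|a * q * α + b * p * β|, |b * p * α + a * q * β|} →
      α = 0 ∧ β = 0) := by
  obtain ⟨hβ₁, hβ₂⟩ := abs_le.mp hαβ
  have hu : 0 ≤ (α + β) / 2 := by linarith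
  have hv : 0 ≤ (α - β) / 2 := by linarith
  have hsum := abs_mul_add_mul_lt hb hab hq hpq
  have hdiff := abs_mul_sub_mul_lt hb hab hq hpq
  obtain ⟨hineq, hpairs_eq⟩ := four_point_of_abs_le
    (abs_mul_le_mul_of_abs_le hsum.le hu) (abs_mul_le_mul_of_abs_le hdiff.le hv)
  have hA : a * p * α + b * q * β =
      (a * p + b * q) * ((α + β) / 2) + (a * p - b * q) * ((α - β) / 2) := by ring
  have hD : b * q * α + a * p * β =
      (a * p + b * q) * ((α + β) / 2) - (a * p - b * q) * ((α - β) / 2) := by ring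
  have hB : a * q * α + b * p * β =
      (a * q + b * p) * ((α + β) / 2) + (a * q - b * p) * ((α - β) / 2) := by ring
  have hC : b * p * α + a * q * β =
      (a * q + b * p) * ((α + β) / 2) - (a * q - b * p) * ((α - β) / 2) := by ring
  rw [hA, hB, hC, hD]
  refine ⟨hineq, fun hpairs => ?_⟩
  obtain ⟨hX, hY⟩ := hpairs_eq hpairs
  have hu₀ : (α + β) / 2 = 0 := eq_zero_of_abs_mul_eq_mul hsum hX
  have hv₀ : (α - β) / 2 = 0 := eq_zero_of_abs_mul_eq_mul hdiff hY
  constructor <;> linarith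
end
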